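/- arXiv:1904.07985 — 2 statements merged into one kernel-verified Lean document; each statement's English description precedes it below -/
import Mathlib

section
/- Let I = {i₁↔i₂, i₂↔i₃, …, i_{q−1}↔i_q} be a cycle interval in the subgraph G_P traversed by a path P. Then among the interior vertices i₂, i₃, …, i_{q−1} there is at most one splitting point. -/
/-!
If the edges `v↔i` and `v↔j` are both uncovered away from `v`, then `P` reaches `v` before
using either of them, so `v` is joined to `P 0` without these two edges. For two interior
splitting points `x ≠ y` of the interval this gives, for one of them, say `x`, a walk from `x`
to `y` avoiding both interval edges at `x`; continuing along the interval it returns to a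
neighbour of `x`, which closes a cycle through `x` that leaves `x` along a third cycle edge.
So `x` would be a cycle meeting point.
-/

/-- An edge `e` of a graph `H` is a *cycle edge* if it belongs to some cycle of `H`. -/
def SimpleGraph.IsCycleEdge {V : Type*} (H : SimpleGraph V) (e : Sym2 V) : Prop :=
  ∃ (v : V) (c : H.Walk v v), c.IsCycle ∧ e ∈ c.edges

/-- The subgraph `G_P` traversed by the first `m` steps of the path `P`. -/
def pathGraph {V : Type*} (P : ℕ → V) (m : ℕ) : SimpleGraph V :=
  SimpleGraph.fromEdgeSet {e | ∃ t < m, e = s(P t, P (t + 1))}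

/-- A vertex `v` is a *cycle meeting point* of `H` if it is incident to at least three
cycle edges of `H`. -/
def CycleMeetingPoint {V : Type*} (H : SimpleGraph V) (v : V) : Prop :=
  ∃ i j u : V, i ≠ j ∧ i ≠ u ∧ j ≠ u ∧
    H.IsCycleEdge s(v, i) ∧ H.IsCycleEdge s(v, j) ∧ H.IsCycleEdge s(v, u)

/-- The edge `i↔j` is *uncovered in the direction `i → j`* by the length-`m` path `P`:
the first traversal of this edge by `P` goes from `i` to `j`. -/
def UncovTo {V : Type*} (P : ℕ → V) (m : ℕ) (i j : V) : Prop :=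
  ∃ t < m, P t = i ∧ P (t + 1) = j ∧ ∀ t' < t, s(P t', P (t' + 1)) ≠ s(i, j)

/-- A vertex `v` is a *splitting point* of the subgraph traversed by the length-`m` path `P`
if there are distinct vertices `i ≠ j` with `v↔i`, `v↔j` cycle edges of `G_P`, both
uncovered in the direction away from `v`. -/
def SplittingPoint {V : Type*} (P : ℕ → V) (m : ℕ) (v : V) : Prop :=
  ∃ i j : V, i ≠ j ∧
    (pathGraph P m).IsCycleEdge s(v, i) ∧ (pathGraph P m).IsCycleEdge s(v, j) ∧
    UncovTo P m v i ∧ UncovTo P m v j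

namespace SimpleGraph

variable {V : Type*} {H H' : SimpleGraph V}

theorem IsCycleEdge.adj {x y : V} (h : H.IsCycleEdge s(x, y)) : H.Adj x y := by
  obtain ⟨_, c, -, he⟩ := h
  exact c.adj_of_mem_edges he

theorem IsCycleEdge.mono (hle : H ≤ H') {e : Sym2 V} (h : H.IsCycleEdge e) :
    H'.IsCycleEdge e := by
  obtain ⟨v, c, hc, he⟩ := h
  exact ⟨v, c.mapLe hle, hc.mapLe hle, by rwa [Walk.edges_mapLe_eq_edges]⟩

theorem IsCycleEdge.exists_ne {x w : V} (h : H.IsCycleEdge s(x, w)) :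
    ∃ y, y ≠ w ∧ H.IsCycleEdge s(x, y) := by
  classical
  obtain ⟨v, c, hc, he⟩ := h
  have hx : x ∈ c.support := c.fst_mem_support_of_mem_edges he
  have hc' : (c.rotate x hx).IsCycle := hc.rotate hx
  have hsnd : H.IsCycleEdge s(x, (c.rotate x hx).snd) :=
    ⟨x, _, hc', Walk.mk_start_snd_mem_edges hc'.not_nil⟩
  have hpen : H.IsCycleEdge s(x, (c.rotate x hx).penultimate) :=
    ⟨x, _, hc', Sym2.eq_swap ▸ Walk.mk_penultimate_end_mem_edges hc'.not_nil⟩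
  by_cases hw : (c.rotate x hx).snd = w
  · exact ⟨_, fun h => hc'.snd_ne_penultimate (hw.trans h.symm), hpen⟩
  · exact ⟨_, hw, hsnd⟩

theorem exists_isCycleEdge_of_reachable_deleteEdges {x w z : V} (hwz : w ≠ z)
    (hadj : H.Adj x w) (hr : (H.deleteEdges {s(x, w), s(x, z)}).Reachable x w) :
    ∃ y, y ≠ w ∧ y ≠ z ∧ H.IsCycleEdge s(x, y) := by
  have hadj' : (H.deleteEdges {s(x, z)}).Adj x w :=
    deleteEdges_adj.mpr ⟨hadj, fun h => hwz (Sym2.congr_right.mp h)⟩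
  have hr' : ((H.deleteEdges {s(x, z)}).deleteEdges {s(x, w)}).Reachable x w := by
    rwa [deleteEdges_deleteEdges, Set.union_singleton]
  obtain ⟨y, hyw, hy⟩ : ∃ y, y ≠ w ∧ (H.deleteEdges {s(x, z)}).IsCycleEdge s(x, y) :=
    IsCycleEdge.exists_ne (adj_and_reachable_delete_edges_iff_exists_cycle.mp ⟨hadj', hr'⟩)
  refine ⟨y, hyw, ?_, hy.mono (deleteEdges_le _)⟩
  rintro rfl
  exact (deleteEdges_adj.mp hy.adj).2 rfl

theorem reachable_deleteEdges_or_reachable_deleteEdges {x y u : V} {Sx Sy : Set (Sym2 V)}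
    (hSx : ∀ e ∈ Sx, x ∈ e) (hx : (H.deleteEdges Sx).Reachable x u)
    (hy : (H.deleteEdges Sy).Reachable y u) :
    (H.deleteEdges Sx).Reachable x y ∨ (H.deleteEdges Sy).Reachable y x := by
  classical
  obtain ⟨W⟩ := hy
  by_cases hxW : x ∈ W.support
  · exact Or.inr ⟨W.takeUntil x hxW⟩
  · have hW : ∀ e ∈ W.edges, e ∉ Sx := by
      intro e he hex
      obtain ⟨z, rfl⟩ := Sym2.mem_iff_exists.mp (hSx e hex)
      exact hxW (W.fst_mem_support_of_mem_edges he)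
    have hle : (H.deleteEdges Sy).deleteEdges Sx ≤ H.deleteEdges Sx := by
      rw [deleteEdges_deleteEdges]
      exact deleteEdges_anti Set.subset_union_right
    exact Or.inl (hx.trans ⟨((W.toDeleteEdges Sx hW).mapLe hle).reverse⟩)

theorem reachable_of_forall_reachable_succ {f : ℕ → V} {a b : ℕ} (hab : a ≤ b)
    (h : ∀ t, a ≤ t → t < b → H.Reachable (f t) (f (t + 1))) : H.Reachable (f a) (f b) := by
  induction b, hab using Nat.le_induction with
  | base => rfl
  | succ n hn ih => exact (ih fun t h1 h2 => h t h1 (by omega)).trans (h n hn (by omega))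

end SimpleGraph

open SimpleGraph

theorem reachable_deleteEdges_start_of_uncovTo {V : Type*} {P : ℕ → V} {m : ℕ} {v i j : V}
    (hi : UncovTo P m v i) (hj : UncovTo P m v j) :
    ((pathGraph P m).deleteEdges {s(v, i), s(v, j)}).Reachable v (P 0) := by
  obtain ⟨ti, hti, hPi, -, hfirst_i⟩ := hi
  obtain ⟨tj, htj, hPj, -, hfirst_j⟩ := hj
  have hstep : ∀ t, 0 ≤ t → t < min ti tj →
      ((pathGraph P m).deleteEdges {s(v, i), s(v, j)}).Reachable (P t) (P (t + 1)) := by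
    rintro t - ht
    by_cases hloop : P t = P (t + 1)
    · rw [hloop]
    · refine Adj.reachable (deleteEdges_adj.mpr ⟨?_, ?_⟩)
      · exact (fromEdgeSet_adj _).mpr ⟨⟨t, by omega, rfl⟩, hloop⟩
      · rintro (h | h)
        exacts [hfirst_i t (by omega) h, hfirst_j t (by omega) h]
  have hv : P (min ti tj) = v := by
    rcases le_total ti tj with h | h
    · rwa [min_eq_left h]
    · rwa [min_eq_right h]
  exact hv ▸ (reachable_of_forall_reachable_succ (Nat.zero_le _) hstep).symm

/-- The cycle interval `f 0 ↔ f 1 ↔ ⋯ ↔ f (q - 1)` of `H`, without the maximality condition at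
its ends. -/
structure IsCycleChain {V : Type*} (H : SimpleGraph V) (q : ℕ) (f : ℕ → V) : Prop where
  edge_injective : ∀ t < q - 1, ∀ t' < q - 1, s(f t, f (t + 1)) = s(f t', f (t' + 1)) → t = t'
  isCycleEdge : ∀ t < q - 1, H.IsCycleEdge s(f t, f (t + 1))
  not_cycleMeetingPoint : ∀ t, 1 ≤ t → t + 2 ≤ q → ¬ CycleMeetingPoint H (f t)

namespace IsCycleChain

variable {V : Type*} {H : SimpleGraph V} {q : ℕ} {f : ℕ → V} {a b : ℕ}

theorem isCycleEdge_pred (hI : IsCycleChain H q f) (ha1 : 1 ≤ a) (ha2 : a + 2 ≤ q) :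
    H.IsCycleEdge s(f a, f (a - 1)) := by
  have h := hI.isCycleEdge (a - 1) (by omega)
  rwa [Nat.sub_add_cancel ha1, Sym2.eq_swap] at h

theorem pred_ne_succ (hI : IsCycleChain H q f) (ha1 : 1 ≤ a) (ha2 : a + 2 ≤ q) :
    f (a - 1) ≠ f (a + 1) := by
  intro h
  have := hI.edge_injective (a - 1) (by omega) a (by omega)
    (by rw [Nat.sub_add_cancel ha1, h, Sym2.eq_swap])
  omega

theorem eq_or_eq_of_isCycleEdge (hI : IsCycleChain H q f) (ha1 : 1 ≤ a) (ha2 : a + 2 ≤ q)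
    {y : V} (hy : H.IsCycleEdge s(f a, y)) : y = f (a - 1) ∨ y = f (a + 1) := by
  by_contra! hne
  exact hI.not_cycleMeetingPoint a ha1 ha2 ⟨y, f (a - 1), f (a + 1), hne.1, hne.2,
    hI.pred_ne_succ ha1 ha2, hy, hI.isCycleEdge_pred ha1 ha2, hI.isCycleEdge a (by omega)⟩

theorem not_reachable_deleteEdges (hI : IsCycleChain H q f) (ha1 : 1 ≤ a) (ha2 : a + 2 ≤ q)
    (hb1 : 1 ≤ b) (hb2 : b + 2 ≤ q) (hab : a ≠ b) :
    ¬ (H.deleteEdges {s(f a, f (a - 1)), s(f a, f (a + 1))}).Reachable (f a) (f b) := by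
  set D := H.deleteEdges {s(f a, f (a - 1)), s(f a, f (a + 1))}
  have hstep : ∀ t < q - 1, t ≠ a - 1 → t ≠ a → D.Reachable (f t) (f (t + 1)) := by
    intro t ht hpred hsucc
    refine Adj.reachable (deleteEdges_adj.mpr ⟨(hI.isCycleEdge t ht).adj, ?_⟩)
    rintro (h | h)
    · exact hpred (hI.edge_injective t ht (a - 1) (by omega)
        (by rw [h, Nat.sub_add_cancel ha1, Sym2.eq_swap]))
    · exact hsucc (hI.edge_injective t ht a (by omega) h)
  intro hr
  rcases Nat.lt_or_gt_of_ne hab with hlt | hgt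
  · have hr' : D.Reachable (f a) (f (a + 1)) := hr.trans
      (reachable_of_forall_reachable_succ (by omega) fun t h1 h2 =>
        hstep t (by omega) (by omega) (by omega)).symm
    obtain ⟨y, hyw, hyz, hy⟩ := exists_isCycleEdge_of_reachable_deleteEdges
      (hI.pred_ne_succ ha1 ha2).symm (hI.isCycleEdge a (by omega)).adj (by rwa [Set.pair_comm])
    exact (hI.eq_or_eq_of_isCycleEdge ha1 ha2 hy).elim hyz hyw
  · have hr' : D.Reachable (f a) (f (a - 1)) := hr.trans
      (reachable_of_forall_reachable_succ (by omega) fun t h1 h2 =>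
        hstep t (by omega) (by omega) (by omega))
    obtain ⟨y, hyw, hyz, hy⟩ := exists_isCycleEdge_of_reachable_deleteEdges
      (hI.pred_ne_succ ha1 ha2) (hI.isCycleEdge_pred ha1 ha2).adj hr'
    exact (hI.eq_or_eq_of_isCycleEdge ha1 ha2 hy).elim hyw hyz

theorem reachable_deleteEdges_start_of_splittingPoint {P : ℕ → V} {m : ℕ}
    (hI : IsCycleChain (pathGraph P m) q f) (ha1 : 1 ≤ a) (ha2 : a + 2 ≤ q)
    (hs : SplittingPoint P m (f a)) :
    ((pathGraph P m).deleteEdges {s(f a, f (a - 1)), s(f a, f (a + 1))}).Reachable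
      (f a) (P 0) := by
  obtain ⟨i, j, hij, hi, hj, hui, huj⟩ := hs
  rcases hI.eq_or_eq_of_isCycleEdge ha1 ha2 hi with rfl | rfl <;>
    rcases hI.eq_or_eq_of_isCycleEdge ha1 ha2 hj with rfl | rfl
  · exact absurd rfl hij
  · exact reachable_deleteEdges_start_of_uncovTo hui huj
  · rw [Set.pair_comm]
    exact reachable_deleteEdges_start_of_uncovTo hui huj
  · exact absurd rfl hij

end IsCycleChain

theorem stmt_5_general {V : Type*}
    (k : ℕ) (P : ℕ → V)
    (q : ℕ) (f : ℕ → V)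
    (hdistinct : ∀ t < q - 1, ∀ t' < q - 1,
      s(f t, f (t + 1)) = s(f t', f (t' + 1)) → t = t')
    (hcyc : ∀ t < q - 1, (pathGraph P (2 * k)).IsCycleEdge s(f t, f (t + 1)))
    (hinterior : ∀ t, 1 ≤ t → t + 2 ≤ q →
      ¬ CycleMeetingPoint (pathGraph P (2 * k)) (f t)) :
    ({v | (∃ t, 1 ≤ t ∧ t + 2 ≤ q ∧ f t = v) ∧ SplittingPoint P (2 * k) v}).Subsingleton := by
  have hI : IsCycleChain (pathGraph P (2 * k)) q f := ⟨hdistinct, hcyc, hinterior⟩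
  rintro _ ⟨⟨a, ha1, ha2, rfl⟩, hsa⟩ _ ⟨⟨b, hb1, hb2, rfl⟩, hsb⟩
  by_contra hne
  have hab : a ≠ b := fun h => hne (congrArg f h)
  have hincident : ∀ e ∈ ({s(f a, f (a - 1)), s(f a, f (a + 1))} : Set (Sym2 V)), f a ∈ e := by
    rintro e (rfl | rfl) <;> exact Sym2.mem_mk_left _ _
  rcases reachable_deleteEdges_or_reachable_deleteEdges hincident
      (hI.reachable_deleteEdges_start_of_splittingPoint ha1 ha2 hsa)
      (hI.reachable_deleteEdges_start_of_splittingPoint hb1 hb2 hsb) with h | h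
  · exact hI.not_reachable_deleteEdges ha1 ha2 hb1 hb2 hab h
  · exact hI.not_reachable_deleteEdges hb1 hb2 ha1 ha2 hab.symm h

/-- Let `I = {i₁↔i₂, …, i_{q−1}↔i_q}` (encoded by `f : ℕ → V` and `q ≥ 2`)
be a cycle interval in the subgraph `G_P` traversed by a closed path `P` of length `2k`.
Then among the interior vertices `i₂, …, i_{q−1}` there is at most one splitting point. -/
theorem stmt_5 {V : Type*} [Fintype V] [DecidableEq V] (G : SimpleGraph V)
    (k : ℕ) (P : ℕ → V)
    (hadj : ∀ t < 2 * k, G.Adj (P t) (P (t + 1)))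
    (hclosed : P 0 = P (2 * k))
    (q : ℕ) (f : ℕ → V) (hq : 2 ≤ q)
    (hdistinct : ∀ t < q - 1, ∀ t' < q - 1,
      s(f t, f (t + 1)) = s(f t', f (t' + 1)) → t = t')
    (hcyc : ∀ t < q - 1, (pathGraph P (2 * k)).IsCycleEdge s(f t, f (t + 1)))
    (hinterior : ∀ t, 1 ≤ t → t + 2 ≤ q →
      ¬ CycleMeetingPoint (pathGraph P (2 * k)) (f t))
    (hends : f 0 ≠ f (q - 1) →
      CycleMeetingPoint (pathGraph P (2 * k)) (f 0) ∧
      CycleMeetingPoint (pathGraph P (2 * k)) (f (q - 1))) :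
    ({v | (∃ t, 1 ≤ t ∧ t + 2 ≤ q ∧ f t = v) ∧ SplittingPoint P (2 * k) v}).Subsingleton :=
  stmt_5_general k P q f hdistinct hcyc hinterior
end

section
/- Let P be a closed path of length 2k on a graph G, and let H_P be the diagram associated to P. Then for every non-cycle edge e of the traversed subgraph G_P, the number of up-arrows in H_P corresponding to traversals of e equals the number of down-arrows corresponding to traversals of e. -/
/-- The edge travelled at step `t` of `P` has been travelled at some earlier step. -/
def TraveledBefore {V : Type*} (P : ℕ → V) (t : ℕ) : Prop :=
  ∃ t' < t, s(P t', P (t' + 1)) = s(P t, P (t + 1))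

/-- The first traversal of the edge travelled at step `t` was in the *same* direction,
i.e. the minimal step `t₀` traversing this edge has `P t₀ = P t`. -/
def FirstDirSame {V : Type*} (P : ℕ → V) (t : ℕ) : Prop :=
  ∀ t₀ < t, s(P t₀, P (t₀ + 1)) = s(P t, P (t + 1)) →
    (∀ t' < t₀, s(P t', P (t' + 1)) ≠ s(P t, P (t + 1))) → P t₀ = P t

/-- The first traversal of the edge travelled at step `t` was in the *opposite* direction. -/
def FirstDirOpp {V : Type*} (P : ℕ → V) (t : ℕ) : Prop :=
  ∀ t₀ < t, s(P t₀, P (t₀ + 1)) = s(P t, P (t + 1)) →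
    (∀ t' < t₀, s(P t', P (t' + 1)) ≠ s(P t, P (t + 1))) → P t₀ = P (t + 1)

namespace SimpleGraph

variable {V : Type*} {K : SimpleGraph V} {u v : V}

theorem isBridge_of_not_isCycleEdge {e : Sym2 V} (he : e ∈ K.edgeSet)
    (hnc : ¬ K.IsCycleEdge e) : K.IsBridge e :=
  (isBridge_iff_forall_cycle_notMem he).mpr fun w c hc hmem => hnc ⟨w, c, hc, hmem⟩

theorem reachable_deleteEdges_iff_of_step {x y : V} (hxy : x = y ∨ K.Adj x y)
    (hne : s(x, y) ≠ s(u, v)) :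
    (K.deleteEdges {s(u, v)}).Reachable u x ↔ (K.deleteEdges {s(u, v)}).Reachable u y := by
  rcases hxy with rfl | hadj
  · rfl
  · have h : (K.deleteEdges {s(u, v)}).Adj x y := deleteEdges_adj.mpr ⟨hadj, hne⟩
    exact ⟨fun hr => hr.trans h.reachable, fun hr => hr.trans h.symm.reachable⟩

open Classical in
theorem IsBridge.side_sub_side (hb : K.IsBridge s(u, v)) {x y : V} (hxy : x = y ∨ K.Adj x y) :
    ((if (K.deleteEdges {s(u, v)}).Reachable u y then 1 else 0 : ℤ)
        - if (K.deleteEdges {s(u, v)}).Reachable u x then 1 else 0)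
      = (if x = v ∧ y = u then 1 else 0) - if x = u ∧ y = v then 1 else 0 := by
  have hv : ¬ (K.deleteEdges {s(u, v)}).Reachable u v := isBridge_iff.mp hb
  have huv : u ≠ v := by rintro rfl; exact hv .rfl
  by_cases he : s(x, y) = s(u, v)
  · rcases Sym2.eq_iff.mp he with ⟨rfl, rfl⟩ | ⟨rfl, rfl⟩
    · simp [hv, huv]
    · simp [hv, huv, huv.symm]
  · rw [reachable_deleteEdges_iff_of_step hxy he, sub_self, if_neg, if_neg, sub_self]
    · rintro ⟨rfl, rfl⟩; exact he rfl
    · rintro ⟨rfl, rfl⟩; exact he Sym2.eq_swap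

theorem IsBridge.ncard_crossings_eq (hb : K.IsBridge s(u, v)) {P : ℕ → V} {n : ℕ}
    (hP : ∀ t < n, P t = P (t + 1) ∨ K.Adj (P t) (P (t + 1))) (hclosed : P 0 = P n) :
    {t | t < n ∧ P t = u ∧ P (t + 1) = v}.ncard = {t | t < n ∧ P t = v ∧ P (t + 1) = u}.ncard := by
  classical
  set side : V → ℤ := fun x => if (K.deleteEdges {s(u, v)}).Reachable u x then 1 else 0
  have htele : ∑ t ∈ Finset.range n, (side (P (t + 1)) - side (P t)) = 0 := by
    rw [Finset.sum_range_sub (fun t => side (P t)), ← hclosed, sub_self]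
  rw [Finset.sum_congr rfl fun t ht => hb.side_sub_side (hP t (Finset.mem_range.mp ht)),
    Finset.sum_sub_distrib, Finset.sum_boole, Finset.sum_boole, sub_eq_zero] at htele
  have hcoe : ∀ a b : V, {t | t < n ∧ P t = a ∧ P (t + 1) = b}
      = ↑({t ∈ Finset.range n | P t = a ∧ P (t + 1) = b}) := by
    intro a b; ext t; simp
  rw [hcoe, hcoe, Set.ncard_coe_finset, Set.ncard_coe_finset]
  exact_mod_cast htele.symm

end SimpleGraph

section PathTraversal

variable {V : Type*} {P : ℕ → V} {n : ℕ}

theorem pathGraph_adj_or_eq {t : ℕ} (ht : t < n) :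
    P t = P (t + 1) ∨ (pathGraph P n).Adj (P t) (P (t + 1)) := by
  rw [or_iff_not_imp_left, pathGraph, SimpleGraph.fromEdgeSet_adj]
  exact fun h => ⟨⟨t, ht, rfl⟩, h⟩

theorem exists_first_traversal {e : Sym2 V}
    (he : e ∈ (pathGraph P n).edgeSet) :
    ∃ t₀ < n, s(P t₀, P (t₀ + 1)) = e ∧ ∀ t < t₀, s(P t, P (t + 1)) ≠ e := by
  classical
  rw [pathGraph, SimpleGraph.edgeSet_fromEdgeSet] at he
  obtain ⟨⟨t, ht, rfl⟩, -⟩ := he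
  have hex : ∃ t₀, t₀ < n ∧ s(P t₀, P (t₀ + 1)) = s(P t, P (t + 1)) := ⟨t, ht, rfl⟩
  obtain ⟨ht₀, he₀⟩ := Nat.find_spec hex
  exact ⟨Nat.find hex, ht₀, he₀, fun t' ht' he' => Nat.find_min hex ht' ⟨ht'.trans ht₀, he'⟩⟩

theorem eq_of_first_traversal {e : Sym2 V} {a b : ℕ}
    (ha : s(P a, P (a + 1)) = e) (ha' : ∀ t < a, s(P t, P (t + 1)) ≠ e)
    (hb : s(P b, P (b + 1)) = e) (hb' : ∀ t < b, s(P t, P (t + 1)) ≠ e) : a = b := by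
  rcases lt_trichotomy a b with h | h | h
  · exact absurd ha (hb' a h)
  · exact h
  · exact absurd hb (ha' b h)

theorem firstDirSame_of_first_traversal {t₀ t : ℕ}
    (he : s(P t₀, P (t₀ + 1)) = s(P t, P (t + 1)))
    (hmin : ∀ t' < t₀, s(P t', P (t' + 1)) ≠ s(P t, P (t + 1))) (hdir : P t₀ = P t) :
    FirstDirSame P t := by
  intro t₁ _ he₁ hmin₁
  rwa [eq_of_first_traversal he₁ hmin₁ he hmin]

theorem firstDirOpp_of_first_traversal {t₀ t : ℕ}
    (he : s(P t₀, P (t₀ + 1)) = s(P t, P (t + 1)))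
    (hmin : ∀ t' < t₀, s(P t', P (t' + 1)) ≠ s(P t, P (t + 1))) (hdir : P t₀ = P (t + 1)) :
    FirstDirOpp P t := by
  intro t₁ _ he₁ hmin₁
  rwa [eq_of_first_traversal he₁ hmin₁ he hmin]

variable {H : ℕ → ℤ} {t₀ : ℕ}

theorem diagram_up_of_first_dir
    (hnew : ∀ t < n, ¬ TraveledBefore P t → H (t + 1) = H t + 1)
    (hfwd : ∀ t < n, ¬ (pathGraph P n).IsCycleEdge s(P t, P (t + 1)) →
      TraveledBefore P t → FirstDirSame P t → H (t + 1) = H t + 1)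
    (hnc : ¬ (pathGraph P n).IsCycleEdge s(P t₀, P (t₀ + 1)))
    (hmin : ∀ t < t₀, s(P t, P (t + 1)) ≠ s(P t₀, P (t₀ + 1))) :
    ∀ t < n, P t = P t₀ → P (t + 1) = P (t₀ + 1) → H (t + 1) = H t + 1 := by
  intro t ht hu hv
  have he : s(P t, P (t + 1)) = s(P t₀, P (t₀ + 1)) := by rw [hu, hv]
  rcases lt_or_ge t₀ t with hlt | hle
  · refine hfwd t ht (he ▸ hnc) ⟨t₀, hlt, he.symm⟩ ?_
    exact firstDirSame_of_first_traversal he.symm (he ▸ hmin) hu.symm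
  · exact hnew t ht fun ⟨t', ht', he'⟩ => hmin t' (ht'.trans_le hle) (he'.trans he)

theorem diagram_down_of_opp_dir
    (hbwd : ∀ t < n, ¬ (pathGraph P n).IsCycleEdge s(P t, P (t + 1)) →
      TraveledBefore P t → FirstDirOpp P t → H (t + 1) = H t - 1)
    (hnc : ¬ (pathGraph P n).IsCycleEdge s(P t₀, P (t₀ + 1)))
    (hmin : ∀ t < t₀, s(P t, P (t + 1)) ≠ s(P t₀, P (t₀ + 1))) (hne : P t₀ ≠ P (t₀ + 1)) :
    ∀ t < n, P t = P (t₀ + 1) → P (t + 1) = P t₀ → H (t + 1) = H t - 1 := by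
  intro t ht hu hv
  have he : s(P t, P (t + 1)) = s(P t₀, P (t₀ + 1)) := by rw [hu, hv, Sym2.eq_swap]
  have hlt : t₀ < t := by
    rcases lt_trichotomy t₀ t with h | rfl | h
    · exact h
    · exact absurd hu hne
    · exact absurd he (hmin t h)
  refine hbwd t ht (he ▸ hnc) ⟨t₀, hlt, he.symm⟩ ?_
  exact firstDirOpp_of_first_traversal he.symm (he ▸ hmin) hv.symm

theorem setOf_traversal_and_eq {u v : V} {p q : ℕ → Prop}
    (hp : ∀ t < n, P t = u → P (t + 1) = v → p t)
    (hq : ∀ t < n, P t = v → P (t + 1) = u → q t) (hpq : ∀ t, p t → ¬ q t) :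
    {t | t < n ∧ s(P t, P (t + 1)) = s(u, v) ∧ p t} = {t | t < n ∧ P t = u ∧ P (t + 1) = v} := by
  ext t
  simp only [Set.mem_ofPred_eq, Sym2.eq_iff]
  constructor
  · rintro ⟨ht, ⟨hu, hv⟩ | ⟨hv, hu⟩, hpt⟩
    · exact ⟨ht, hu, hv⟩
    · exact absurd (hq t ht hv hu) (hpq t hpt)
  · rintro ⟨ht, hu, hv⟩
    exact ⟨ht, .inl ⟨hu, hv⟩, hp t ht hu hv⟩

end PathTraversal

theorem stmt_7_general {V : Type*} (k : ℕ) (P : ℕ → V)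
    (hclosed : P 0 = P (2 * k))
    (H : ℕ → ℤ)
    (hnew : ∀ t < 2 * k, ¬ TraveledBefore P t → H (t + 1) = H t + 1)
    (hfwd : ∀ t < 2 * k,
      ¬ (pathGraph P (2 * k)).IsCycleEdge s(P t, P (t + 1)) →
      TraveledBefore P t → FirstDirSame P t → H (t + 1) = H t + 1)
    (hbwd : ∀ t < 2 * k,
      ¬ (pathGraph P (2 * k)).IsCycleEdge s(P t, P (t + 1)) →
      TraveledBefore P t → FirstDirOpp P t → H (t + 1) = H t - 1) :
    ∀ e ∈ (pathGraph P (2 * k)).edgeSet,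
      ¬ (pathGraph P (2 * k)).IsCycleEdge e →
      ({t | t < 2 * k ∧ s(P t, P (t + 1)) = e ∧ H (t + 1) = H t + 1}).ncard
        = ({t | t < 2 * k ∧ s(P t, P (t + 1)) = e ∧ H (t + 1) = H t - 1}).ncard := by
  intro e he hnc
  obtain ⟨t₀, -, rfl, hmin⟩ := exists_first_traversal he
  have hne : P t₀ ≠ P (t₀ + 1) := (SimpleGraph.mem_edgeSet _).mp he |>.ne
  have hup := diagram_up_of_first_dir hnew hfwd hnc hmin
  have hdown := diagram_down_of_opp_dir hbwd hnc hmin hne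
  have hexcl : ∀ t, H (t + 1) = H t + 1 → H (t + 1) ≠ H t - 1 := by omega
  rw [setOf_traversal_and_eq hup hdown hexcl,
    show s(P t₀, P (t₀ + 1)) = s(P (t₀ + 1), P t₀) from Sym2.eq_swap,
    setOf_traversal_and_eq hdown hup fun t h h' => hexcl t h' h]
  exact (SimpleGraph.isBridge_of_not_isCycleEdge he hnc).ncard_crossings_eq
    (fun _ ht => pathGraph_adj_or_eq ht) hclosed

/-- Let `P` be a closed path of length `2k` on a graph `G` and `H` the
diagram associated with `P` (defined by the four displayed rules). Then for every non-cycle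
edge `e` of the traversed subgraph `G_P`, the number of up-arrows of `H` corresponding to
traversals of `e` equals the number of down-arrows corresponding to traversals of `e`. -/
theorem stmt_7 {V : Type*} [Fintype V] [DecidableEq V] (G : SimpleGraph V)
    (k : ℕ) (P : ℕ → V)
    (hadj : ∀ t < 2 * k, G.Adj (P t) (P (t + 1)))
    (hclosed : P 0 = P (2 * k))
    (H : ℕ → ℤ) (hH0 : H 0 = 0)
    (hnew : ∀ t < 2 * k, ¬ TraveledBefore P t → H (t + 1) = H t + 1)
    (hfwd : ∀ t < 2 * k,
      ¬ (pathGraph P (2 * k)).IsCycleEdge s(P t, P (t + 1)) →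
      TraveledBefore P t → FirstDirSame P t → H (t + 1) = H t + 1)
    (hbwd : ∀ t < 2 * k,
      ¬ (pathGraph P (2 * k)).IsCycleEdge s(P t, P (t + 1)) →
      TraveledBefore P t → FirstDirOpp P t → H (t + 1) = H t - 1)
    (hcyc : ∀ t < 2 * k,
      (pathGraph P (2 * k)).IsCycleEdge s(P t, P (t + 1)) →
      TraveledBefore P t → H (t + 1) = H t - 1) :
    ∀ e ∈ (pathGraph P (2 * k)).edgeSet,
      ¬ (pathGraph P (2 * k)).IsCycleEdge e →
      ({t | t < 2 * k ∧ s(P t, P (t + 1)) = e ∧ H (t + 1) = H t + 1}).ncard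
        = ({t | t < 2 * k ∧ s(P t, P (t + 1)) = e ∧ H (t + 1) = H t - 1}).ncard :=
  stmt_7_general k P hclosed H hnew hfwd hbwd
end
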